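/- Let A be a finite-dimensional real associative unital algebra of dimension N, and let S = {s ∈ A : s² = -1}. Then S is contained in a hyperplane of A not containing 1; consequently the map from ℂ₊ × S to A sending (x + iy, s) to x·1 + y·s (with y > 0) is injective. -/

import Mathlib

/-!
The functional `a ↦ tr(x ↦ a x)` does the job: it takes the value `dim A` at `1`, while for
`s² = -1` left multiplication by `s` is a complex structure on `A`, and in a real basis of the
form `bⱼ, i bⱼ` its matrix has zero diagonal. Applying the functional to
`x + y s = x' + y' s'` gives `x = x'`; squaring `y s = y' s'` gives `y² = y'²`.
-/

open Module

theorem LinearMap.trace_restrictScalars_smul_I {V : Type*} [AddCommGroup V] [Module ℂ V]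
    [Module ℝ V] [IsScalarTower ℝ ℂ V] [FiniteDimensional ℂ V] :
    LinearMap.trace ℝ V (DistribSMul.toLinearMap ℝ V Complex.I) = 0 := by
  let b := Complex.basisOneI.smulTower (finBasis ℂ V)
  rw [LinearMap.trace_eq_matrix_trace ℝ b, Matrix.trace]
  refine Finset.sum_eq_zero fun ⟨k, j⟩ _ => ?_
  rw [Matrix.diag_apply, LinearMap.toMatrix_apply, Module.Basis.smulTower_apply,
    Module.Basis.smulTower_repr]
  fin_cases k <;> simp [smul_smul, Complex.coe_basisOneI_repr]

theorem LinearMap.trace_eq_zero_of_mul_self_eq_neg_one {V : Type*} [AddCommGroup V] [Module ℝ V]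
    [FiniteDimensional ℝ V] {f : Module.End ℝ V} (hf : f * f = -1) :
    LinearMap.trace ℝ V f = 0 := by
  let _ : Module ℂ V := Module.compHom V (Complex.liftAux f hf).toRingHom
  have : IsScalarTower ℝ ℂ V := ⟨fun r z v => by
    show Complex.liftAux f hf (r • z) v = r • Complex.liftAux f hf z v
    rw [map_smul]; rfl⟩
  have : FiniteDimensional ℂ V := FiniteDimensional.right ℝ ℂ V
  convert LinearMap.trace_restrictScalars_smul_I (V := V)
  ext v
  exact (congrArg (· v) (Complex.liftAux_apply_I f hf)).symm

theorem exists_linearMap_map_one_ne_zero_of_mul_self_eq_neg_one {A : Type*} [Ring A] [Algebra ℝ A]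
    [FiniteDimensional ℝ A] [Nontrivial A] :
    ∃ φ : A →ₗ[ℝ] ℝ, φ 1 ≠ 0 ∧ ∀ s : A, s * s = -1 → φ s = 0 := by
  refine ⟨(LinearMap.trace ℝ A).comp (Algebra.lmul ℝ A).toLinearMap, ?_, fun s hs => ?_⟩
  · rw [LinearMap.comp_apply, AlgHom.toLinearMap_apply, map_one, LinearMap.trace_one]
    exact Nat.cast_ne_zero.2 finrank_pos.ne'
  · apply LinearMap.trace_eq_zero_of_mul_self_eq_neg_one
    rw [AlgHom.toLinearMap_apply, ← map_mul, hs, map_neg, map_one]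

theorem eq_and_eq_of_smul_eq_smul_of_mul_self_eq_neg_one {K A : Type*} [Field K] [LinearOrder K]
    [IsStrictOrderedRing K] [Ring A] [Algebra K A] [Nontrivial A] {y y' : K} {s s' : A}
    (hy : 0 < y) (hy' : 0 < y') (hs : s * s = -1) (hs' : s' * s' = -1) (h : y • s = y' • s') :
    y = y' ∧ s = s' := by
  have hsq : (y * y) • (-1 : A) = (y' * y') • -1 := by
    calc (y * y) • (-1 : A) = (y • s) * (y • s) := by rw [smul_mul_smul_comm, hs]
      _ = (y' * y') • -1 := by rw [h, smul_mul_smul_comm, hs']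
  obtain rfl : y = y' :=
    (mul_self_inj hy.le hy'.le).1 (smul_left_injective K (neg_ne_zero.2 one_ne_zero) hsq)
  exact ⟨rfl, smul_right_injective A hy.ne' h⟩

theorem eq_and_eq_and_eq_of_smul_one_add_smul_eq {K A : Type*} [Field K] [LinearOrder K]
    [IsStrictOrderedRing K] [Ring A] [Algebra K A] {φ : A →ₗ[K] K} (hφ1 : φ 1 ≠ 0)
    (hφS : ∀ s : A, s * s = -1 → φ s = 0) {x y x' y' : K} {s s' : A}
    (hy : 0 < y) (hy' : 0 < y') (hs : s * s = -1) (hs' : s' * s' = -1)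
    (h : x • (1 : A) + y • s = x' • (1 : A) + y' • s') :
    x = x' ∧ y = y' ∧ s = s' := by
  have : Nontrivial A := ⟨⟨1, 0, fun h => hφ1 (by simp [h])⟩⟩
  obtain rfl : x = x' := by
    simpa [hφS s hs, hφS s' hs', hφ1] using congrArg φ h
  exact ⟨rfl, eq_and_eq_of_smul_eq_smul_of_mul_self_eq_neg_one hy hy' hs hs' (add_left_cancel h)⟩

/-- In a nontrivial finite-dimensional real associative unital algebra `A`, the set
`S = {s : s² = -1}` is contained in a hyperplane not containing `1` (the kernel of a linear
functional not vanishing at `1`); consequently the map `ℂ₊ × S → A`,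
`(x + iy, s) ↦ x·1 + y·s` (with `y > 0`) is injective. -/
theorem S_in_hyperplane_and_injectivity
    {A : Type*} [Ring A] [Algebra ℝ A] [FiniteDimensional ℝ A] [Nontrivial A] :
    (∃ φ : A →ₗ[ℝ] ℝ, φ 1 ≠ 0 ∧ ∀ s : A, s * s = -1 → φ s = 0) ∧
    (∀ (x y x' y' : ℝ) (s s' : A), 0 < y → 0 < y' →
      s * s = -1 → s' * s' = -1 →
      x • (1 : A) + y • s = x' • (1 : A) + y' • s' →
      x = x' ∧ y = y' ∧ s = s') := by
  obtain ⟨φ, hφ1, hφS⟩ := exists_linearMap_map_one_ne_zero_of_mul_self_eq_neg_one (A := A)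
  exact ⟨⟨φ, hφ1, hφS⟩, fun _ _ _ _ _ _ hy hy' hs hs' h =>
    eq_and_eq_and_eq_of_smul_one_add_smul_eq hφ1 hφS hy hy' hs hs' h⟩
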